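/- arXiv:math/9802119 — 4 statements merged into one kernel-verified Lean document; each statement's English description precedes it below -/
import Mathlib

section
/- If m is not divisible by n, then the space of SL(n,f)-invariants in V^⊗m is zero, where V = f^n with the standard SL(n) action. -/
/-!
Diagonal matrices of determinant one act on the standard basis tensor
`e_{k 1} ⊗ ⋯ ⊗ e_{k m}` by the character `d ↦ ∏ j, d j ^ #(k⁻¹ j)`. A nonzero coordinate of an
invariant tensor forces this character to be trivial on the torus of `SL(n)`; testing it on
`diag(…, 2, …, 2⁻¹, …)` shows that all fibres of `k` have the same size (here `2` has infinite
order because the characteristic is zero), so `n ∣ m`.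
-/

open scoped TensorProduct

/-- Diagonal action of a matrix on the `m`-fold tensor power of `Fin n → f`. -/
noncomputable def tensorAct (f : Type*) [Field f] (n m : ℕ) (a : Matrix (Fin n) (Fin n) f) :
    (⨂[f] _ : Fin m, (Fin n → f)) →ₗ[f] ⨂[f] _ : Fin m, (Fin n → f) :=
  PiTensorProduct.map (fun _ => a.mulVecLin)

/-- The antisymmetrized tensor `ω = Σ_σ sgn σ • x_{σ 1} ⊗ ⋯ ⊗ x_{σ n}`. -/
noncomputable def omegaTensor (f : Type*) [Field f] (n : ℕ) :
    ⨂[f] _ : Fin n, (Fin n → f) :=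
  ∑ σ : Equiv.Perm (Fin n),
    (Equiv.Perm.sign σ : ℤ) • ⨂ₜ[f] i, Pi.single (σ i) (1 : f)

open Finset

theorem Fintype.prod_comp_eq_prod_pow_card_fiber {ι κ M : Type*} [Fintype ι] [Fintype κ]
    [DecidableEq κ] [CommMonoid M] (k : ι → κ) (d : κ → M) :
    ∏ i, d (k i) = ∏ j, d j ^ #{i | k i = j} := by
  rw [← Finset.prod_fiberwise' univ k d]
  exact Finset.prod_congr rfl fun j _ => Finset.prod_const _

theorem Fintype.card_dvd_of_card_fiber_eq {ι κ : Type*} [Fintype ι] [Fintype κ]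
    [DecidableEq κ] (k : ι → κ) (h : ∀ j₀ j₁, #{i | k i = j₀} = #{i | k i = j₁}) :
    Fintype.card κ ∣ Fintype.card ι := by
  rcases isEmpty_or_nonempty κ with _ | ⟨⟨j⟩⟩
  · simp [(k.isEmpty : IsEmpty ι)]
  · refine ⟨#{i | k i = j}, ?_⟩
    rw [← Finset.card_univ, Finset.card_eq_sum_card_fiberwise fun i _ => mem_univ (k i),
      Finset.sum_congr rfl fun j' _ => h j' j, Finset.sum_const, Finset.card_univ, smul_eq_mul]

theorem Fintype.prod_pi_mulSingle_pow {M κ : Type*} [CommMonoid M] [Fintype κ] [DecidableEq κ]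
    (a : κ → ℕ) (j : κ) (x : M) :
    ∏ i, Pi.mulSingle j x i ^ a i = x ^ a j :=
  (Fintype.prod_eq_single j fun i hi => by simp [hi]).trans (by simp)

theorem eq_of_forall_prod_pow_eq_one {K κ : Type*} [Field K] [CharZero K] [Fintype κ]
    [DecidableEq κ] (a : κ → ℕ) (h : ∀ d : κ → K, ∏ j, d j = 1 → ∏ j, d j ^ a j = 1)
    (j₀ j₁ : κ) : a j₀ = a j₁ := by
  have h2 := h (Pi.mulSingle j₀ 2 * Pi.mulSingle j₁ 2⁻¹) (by simp [prod_mul_distrib])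
  simp only [Pi.mul_apply, mul_pow, prod_mul_distrib, Fintype.prod_pi_mulSingle_pow] at h2
  have h2_nat : ((2 ^ a j₀ : ℕ) : K) = ((2 ^ a j₁ : ℕ) : K) := by
    push_cast
    rwa [inv_pow, mul_inv_eq_one₀ (pow_ne_zero _ two_ne_zero)] at h2
  exact Nat.pow_right_injective le_rfl (Nat.cast_injective h2_nat)

theorem Basis.piTensorProduct_repr_map_diagonal {R ι κ : Type*} [CommRing R] [Fintype ι]
    [Fintype κ] [DecidableEq κ] (d : κ → R) (t : ⨂[R] _ : ι, (κ → R)) (k : ι → κ) :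
    (Basis.piTensorProduct fun _ => Pi.basisFun R κ).repr
        (PiTensorProduct.map (fun _ => (Matrix.diagonal d).mulVecLin) t) k =
      (∏ i, d (k i)) * (Basis.piTensorProduct fun _ => Pi.basisFun R κ).repr t k := by
  induction t using PiTensorProduct.induction_on with
  | smul_tprod r v =>
    simp only [map_smul, PiTensorProduct.map_tprod, Matrix.mulVecLin_apply, Finsupp.coe_smul,
      Pi.smul_apply, piTensorProduct_repr_tprod_apply, Pi.basisFun_repr, Matrix.mulVec_diagonal,
      prod_mul_distrib, smul_eq_mul]
    ring
  | add x y hx hy => simp [hx, hy, mul_add]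

theorem invariants_zero_of_not_dvd (f : Type*) [Field f] [CharZero f] (n m : ℕ)
    (h : ¬ n ∣ m) (t : ⨂[f] _ : Fin m, (Fin n → f))
    (ht : ∀ a : Matrix.SpecialLinearGroup (Fin n) f,
      tensorAct f n m (a : Matrix (Fin n) (Fin n) f) t = t) :
    t = 0 := by
  set B := Basis.piTensorProduct fun _ : Fin m => Pi.basisFun f (Fin n)
  refine B.repr.map_eq_zero_iff.mp (Finsupp.ext fun k => ?_)
  by_contra hk
  have hweight (d : Fin n → f) (hd : ∏ j, d j = 1) : ∏ j, d j ^ #{i | k i = j} = 1 := by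
    have hcoord := congr(B.repr $(ht ⟨Matrix.diagonal d, by rwa [Matrix.det_diagonal]⟩) k)
    rw [tensorAct, Basis.piTensorProduct_repr_map_diagonal,
      Fintype.prod_comp_eq_prod_pow_card_fiber] at hcoord
    exact (mul_eq_right₀ hk).mp hcoord
  exact h <| by
    simpa using Fintype.card_dvd_of_card_fiber_eq k (eq_of_forall_prod_pow_eq_one _ hweight)
end

section
/- The tensors t_G, as G ranges over all n-wave graphs on m vertices, are linearly independent in V^⊗m. -/
open scoped TensorProduct

/-- An `n`-wave graph on `k * n` vertices, encoded as a bijection sending each vertex to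
(its component, its position in the component): positions within a component are
increasingly ordered, components are labeled by the order of their first vertices,
and on every page `N` (carrying the `N`-th edge of every component) no two edges cross. -/
def IsWaveStruct {k n : ℕ} (hn : 0 < n) (e : Fin (k * n) ≃ Fin k × Fin n) : Prop :=
  (∀ j : Fin k, StrictMono fun i : Fin n => e.symm (j, i)) ∧
  (StrictMono fun j : Fin k => e.symm (j, ⟨0, hn⟩)) ∧
  (∀ (j j' : Fin k) (N : ℕ) (h : N + 1 < n),
    ¬(e.symm (j, ⟨N, Nat.lt_of_succ_lt h⟩) < e.symm (j', ⟨N, Nat.lt_of_succ_lt h⟩) ∧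
      e.symm (j', ⟨N, Nat.lt_of_succ_lt h⟩) < e.symm (j, ⟨N + 1, h⟩) ∧
      e.symm (j, ⟨N + 1, h⟩) < e.symm (j', ⟨N + 1, h⟩)))

/-- The tensor `t_G = Σ_{g ∈ O(G)} (-1)^{inv g} b_g` attached to a wave graph (or to any
partition of the `k * n` tensor positions into `k` ordered blocks of size `n`): the sum
over all orientations of each block of the signed standard monomials, i.e. the image of
`(x₁ ∧ ⋯ ∧ xₙ)^{⊗ k}` under the permutation of tensor factors determined by `e`. -/
noncomputable def waveTensor (f : Type*) [Field f] {k n : ℕ}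
    (e : Fin (k * n) ≃ Fin k × Fin n) : ⨂[f] _ : Fin (k * n), (Fin n → f) :=
  ∑ c : Fin k → Equiv.Perm (Fin n),
    (∏ j : Fin k, (Equiv.Perm.sign (c j) : ℤ)) •
      ⨂ₜ[f] v, Pi.single ((c (e v).1) ((e v).2)) (1 : f)

/-!
Expand `t_G` in the monomial basis `x_w = x_{w 1} ⊗ ⋯ ⊗ x_{w m}`: the orientation `c`
contributes `± x_w` with `w v = c_{comp v} (pos v)`, and distinct orientations give distinct
monomials. Since positions increase along each component, the left-to-right orientation (`c = 1`,
giving `w = pos`) is the lex-smallest of them, so `x_pos` is the lowest term of `t_G`, with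
coefficient `1`.

A wave graph is recovered from `pos` vertex by vertex. Suppose `e` and `e'` agree below `v` but
put `v` into components `j ≠ j'`. If `v` has position `0`, then in the graph placing `v` in the
larger-labelled component the other component starts before `v`. If `v` has position `N + 1`, the
`N`-th vertices of `j` and `j'` both precede `v`; in the graph where the earlier of them is
continued by `v`, non-crossing on page `N` forces the other component to continue before `v`.
Either way some `u < v` satisfies `e u = e' v` or `e' u = e v`, although `e u = e' u`.

Distinct lowest terms with unit coefficients make the family independent.
-/

open Function

theorem linearIndependent_of_unitriangular {ι κ R M : Type*} [Ring R] [AddCommGroup M]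
    [Module R M] [LinearOrder κ] {v : ι → M} (φ : κ → M →ₗ[R] R) (low : ι → κ)
    (hlow : Injective low) (h_one : ∀ i, φ (low i) (v i) = 1)
    (h_le : ∀ i x, φ x (v i) ≠ 0 → low i ≤ x) : LinearIndependent R v := by
  classical
  rw [linearIndependent_iff']
  intro s g hsum
  by_contra! ⟨i, hi, hgi⟩
  obtain ⟨i₀, hi₀, hmin⟩ :=
    (s.filter (g · ≠ 0)).exists_min_image low ⟨i, Finset.mem_filter.2 ⟨hi, hgi⟩⟩
  rw [Finset.mem_filter] at hi₀
  have hcoeff : φ (low i₀) (∑ i ∈ s, g i • v i) = g i₀ := by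
    rw [map_sum, Finset.sum_eq_single i₀ _ fun h => (h hi₀.1).elim, map_smul, h_one, smul_eq_mul,
      mul_one]
    intro j hj hji₀
    by_cases hgj : g j = 0
    · rw [hgj, zero_smul, map_zero]
    have : φ (low i₀) (v j) = 0 := by
      by_contra hne
      exact hji₀ (hlow (le_antisymm (h_le j _ hne) (hmin j (Finset.mem_filter.2 ⟨hj, hgj⟩))))
    rw [map_smul, this, smul_zero]
  rw [hsum, map_zero] at hcoeff
  exact hi₀.2 hcoeff.symm

theorem Equiv.Perm.le_apply_of_forall_lt_apply_eq {γ : Type*} [LinearOrder γ] (σ : Equiv.Perm γ)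
    {i : γ} (h : ∀ i' < i, σ i' = i') : i ≤ σ i :=
  not_lt.1 fun hlt => hlt.ne (σ.injective (h _ hlt))

section WaveMonomial

variable {α β γ : Type*}

def waveMonomial (e : α ≃ β × γ) (c : β → Equiv.Perm γ) : α → γ := fun v => c (e v).1 (e v).2

@[simp]
theorem waveMonomial_one_apply (e : α ≃ β × γ) (v : α) : waveMonomial e 1 v = (e v).2 := rfl

theorem waveMonomial_injective (e : α ≃ β × γ) : Injective (waveMonomial e) := by
  intro c c' h
  funext j
  ext i
  simpa [waveMonomial] using congrFun h (e.symm (j, i))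

theorem toLex_waveMonomial_one_le [LinearOrder α] [WellFoundedLT α] [LinearOrder γ]
    {e : α ≃ β × γ} (he : ∀ j, StrictMono fun i => e.symm (j, i)) (c : β → Equiv.Perm γ) :
    toLex (waveMonomial e 1) ≤ toLex (waveMonomial e c) := by
  rcases eq_or_ne (waveMonomial e 1) (waveMonomial e c) with h | h
  · exact (congrArg toLex h).le
  obtain ⟨v, hv, hmin⟩ := wellFounded_lt.has_min {v | waveMonomial e 1 v ≠ waveMonomial e c v}
    (Function.ne_iff.1 h)
  have hbelow : ∀ u < v, waveMonomial e 1 u = waveMonomial e c u := fun u hu =>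
    not_not.1 fun hne => hmin u hne hu
  have hfix : ∀ i < (e v).2, c (e v).1 i = i := fun i hi => by
    have := hbelow _ (by simpa using he (e v).1 hi)
    simpa [waveMonomial] using this.symm
  refine (show toLex (waveMonomial e 1) < toLex (waveMonomial e c) from ⟨v, hbelow, ?_⟩).le
  exact lt_of_le_of_ne ((c (e v).1).le_apply_of_forall_lt_apply_eq hfix) hv

end WaveMonomial

section MonomialBasis

variable (R : Type*) [CommSemiring R] (ι γ : Type*) [Finite ι] [Finite γ]

noncomputable def tensorPowerBasisFun : Module.Basis (ι → γ) R (⨂[R] _ : ι, (γ → R)) :=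
  Basis.piTensorProduct fun _ => Pi.basisFun R γ

theorem tensorPowerBasisFun_apply [DecidableEq γ] (w : ι → γ) :
    tensorPowerBasisFun R ι γ w = ⨂ₜ[R] v, Pi.single (w v) 1 := by
  simp [tensorPowerBasisFun]

end MonomialBasis

section WaveTensor

variable (f : Type*) [Field f] {k n : ℕ}

theorem waveTensor_eq_sum (e : Fin (k * n) ≃ Fin k × Fin n) :
    waveTensor f e = ∑ c : Fin k → Equiv.Perm (Fin n),
      (∏ j, (Equiv.Perm.sign (c j) : ℤ)) • tensorPowerBasisFun f _ _ (waveMonomial e c) := by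
  simp only [waveTensor, tensorPowerBasisFun_apply]
  rfl

theorem coord_waveTensor (e : Fin (k * n) ≃ Fin k × Fin n) (w : Fin (k * n) → Fin n) :
    (tensorPowerBasisFun f _ _).coord w (waveTensor f e) =
      ∑ c : Fin k → Equiv.Perm (Fin n),
        (∏ j, (Equiv.Perm.sign (c j) : ℤ)) • if waveMonomial e c = w then (1 : f) else 0 := by
  simp only [waveTensor_eq_sum, map_sum, map_zsmul, Module.Basis.coord_apply,
    Module.Basis.repr_self, Finsupp.single_apply]

theorem coord_waveMonomial_one_waveTensor (e : Fin (k * n) ≃ Fin k × Fin n) :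
    (tensorPowerBasisFun f _ _).coord (waveMonomial e 1) (waveTensor f e) = 1 := by
  rw [coord_waveTensor, Fintype.sum_eq_single 1 fun c hc => by
    rw [if_neg ((waveMonomial_injective e).ne hc), smul_zero]]
  simp

theorem exists_waveMonomial_eq_of_coord_waveTensor_ne_zero (e : Fin (k * n) ≃ Fin k × Fin n)
    {w : Fin (k * n) → Fin n} (h : (tensorPowerBasisFun f _ _).coord w (waveTensor f e) ≠ 0) :
    ∃ c, waveMonomial e c = w := by
  contrapose! h
  rw [coord_waveTensor]
  exact Finset.sum_eq_zero fun c _ => by rw [if_neg (h c), smul_zero]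

end WaveTensor

section Agree

variable {α β : Type*} [LinearOrder α] {e e' : α ≃ β} {v : α}

theorem Equiv.symm_eq_of_agree (hagree : ∀ u < v, e u = e' u) {p : β} (hp : e.symm p < v) :
    e'.symm p = e.symm p :=
  e'.symm_apply_eq.2 ((hagree _ hp).symm.trans (e.apply_symm_apply p)).symm

theorem Equiv.apply_ne_of_agree (hagree : ∀ u < v, e u = e' u) {u : α} (hu : u < v) :
    e u ≠ e' v := fun h => hu.ne (e'.injective ((hagree u hu).symm.trans h))

end Agree

namespace IsWaveStruct

variable {k n : ℕ} {hn : 0 < n} {e e' : Fin (k * n) ≃ Fin k × Fin n} {v : Fin (k * n)}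
  {j j' : Fin k} {N : ℕ} {h : N + 1 < n}

theorem symm_lt_symm_succ (he : IsWaveStruct hn e) :
    e.symm (j, ⟨N, Nat.lt_of_succ_lt h⟩) < e.symm (j, ⟨N + 1, h⟩) :=
  he.1 j (Nat.lt_succ_self N)

theorem symm_succ_lt_symm_succ (he : IsWaveStruct hn e) (hjj' : j ≠ j')
    (ha : e.symm (j, ⟨N, Nat.lt_of_succ_lt h⟩) < e.symm (j', ⟨N, Nat.lt_of_succ_lt h⟩))
    (ha' : e.symm (j', ⟨N, Nat.lt_of_succ_lt h⟩) < e.symm (j, ⟨N + 1, h⟩)) :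
    e.symm (j', ⟨N + 1, h⟩) < e.symm (j, ⟨N + 1, h⟩) :=
  lt_of_le_of_ne (not_lt.1 fun h' => he.2.2 j j' N h ⟨ha, ha', h'⟩)
    (e.symm.injective.ne (by simp [hjj'.symm]))

theorem fst_eq_of_agree (he : IsWaveStruct hn e) (he' : IsWaveStruct hn e')
    (hagree : ∀ u < v, e u = e' u) (hsnd : (e v).2 = (e' v).2) : (e v).1 = (e' v).1 := by
  have hagree' : ∀ u < v, e' u = e u := fun u hu => (hagree u hu).symm
  obtain ⟨⟨j, i⟩, hv⟩ : ∃ p, e v = p := ⟨_, rfl⟩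
  obtain ⟨j', hv'⟩ : ∃ j', e' v = (j', i) := ⟨_, Prod.ext rfl (by rw [← hsnd, hv])⟩
  simp only [hv, hv']
  by_contra hjj'
  have hsv := e.symm_apply_eq.2 hv.symm
  have hsv' := e'.symm_apply_eq.2 hv'.symm
  rcases i with ⟨_ | N, hi⟩
  · rcases lt_or_gt_of_ne hjj' with hlt | hlt
    · exact e'.apply_ne_of_agree hagree' ((he'.2.1 hlt).trans_eq hsv') (by simp [hv])
    · exact e.apply_ne_of_agree hagree ((he.2.1 hlt).trans_eq hsv) (by simp [hv'])
  · have ha := he.symm_lt_symm_succ.trans_eq hsv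
    have ha' := he'.symm_lt_symm_succ.trans_eq hsv'
    have htr := e.symm_eq_of_agree hagree ha
    have htr' := e'.symm_eq_of_agree hagree' ha'
    rcases lt_or_gt_of_ne (e.symm.injective.ne (by simpa using hjj') :
      e.symm (j, ⟨N, Nat.lt_of_succ_lt hi⟩) ≠ e.symm (j', ⟨N, Nat.lt_of_succ_lt hi⟩)) with hlt | hlt
    · have hu := (he.symm_succ_lt_symm_succ hjj' hlt (by rwa [htr', hsv])).trans_eq hsv
      exact e.apply_ne_of_agree hagree hu (by simp [hv'])
    · have hu := (he'.symm_succ_lt_symm_succ (Ne.symm hjj') (by rwa [htr, ← htr'])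
        (by rwa [htr, hsv'])).trans_eq hsv'
      exact e'.apply_ne_of_agree hagree' hu (by simp [hv])

theorem eq_of_waveMonomial_one_eq (he : IsWaveStruct hn e) (he' : IsWaveStruct hn e')
    (h : waveMonomial e 1 = waveMonomial e' 1) : e = e' := by
  refine Equiv.ext fun v => WellFoundedLT.induction (motive := fun v => e v = e' v) v
    fun v hagree => ?_
  have hsnd : (e v).2 = (e' v).2 := by simpa using congrFun h v
  exact Prod.ext (fst_eq_of_agree he he' hagree hsnd) hsnd

end IsWaveStruct

theorem waveTensors_linearIndependent_general (f : Type*) [Field f] (k n : ℕ)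
    (hn : 0 < n) :
    LinearIndependent f
      (fun G : {e : Fin (k * n) ≃ Fin k × Fin n // IsWaveStruct hn e} =>
        waveTensor f G.val) := by
  refine linearIndependent_of_unitriangular
    (fun w : Lex (Fin (k * n) → Fin n) => (tensorPowerBasisFun f _ _).coord (ofLex w))
    (fun G => toLex (waveMonomial G.val 1))
    (fun G G' h => Subtype.ext (G.prop.eq_of_waveMonomial_one_eq G'.prop (toLex.injective h)))
    (fun G => coord_waveMonomial_one_waveTensor f G.val) fun G w hw => ?_
  obtain ⟨c, hc⟩ := exists_waveMonomial_eq_of_coord_waveTensor_ne_zero f G.val hw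
  rw [← toLex_ofLex w, ← hc]
  exact toLex_waveMonomial_one_le G.prop.1 c

theorem waveTensors_linearIndependent (f : Type*) [Field f] [CharZero f] (k n : ℕ)
    (hn : 0 < n) :
    LinearIndependent f
      (fun G : {e : Fin (k * n) ≃ Fin k × Fin n // IsWaveStruct hn e} =>
        waveTensor f G.val) :=
  waveTensors_linearIndependent_general f k n hn
end

section
/- For each n-wave graph G, among all orientations g ∈ O(G) there is a unique one with zero inversions (each component ordered left to right), and the corresponding monomial b_{g₀} is lexicographically minimal among all b_g, g ∈ O(G); moreover, the map G ↦ b_{g₀} is injective on the set of n-wave graphs on m vertices. -/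
/-- For a wave graph: the identity orientation is the unique inversion-free orientation of
the components; its index word `v ↦ (e v).2` (the lattice word of the graph) is
lexicographically minimal among the index words of all orientations; and the map from
wave graphs to these minimal words is injective. -/
theorem minimal_orientation_lex_min_injective (k n : ℕ) (hn : 0 < n) :
    (∃! c : Fin k → Equiv.Perm (Fin n),
      ∀ (j : Fin k) (i i' : Fin n), i < i' → c j i < c j i') ∧
    (∀ e : Fin (k * n) ≃ Fin k × Fin n, IsWaveStruct hn e →
      ∀ c : Fin k → Equiv.Perm (Fin n),
        (fun v : Fin (k * n) => (e v).2) = (fun v => (c (e v).1) ((e v).2)) ∨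
        ∃ v : Fin (k * n), (e v).2 < (c (e v).1) ((e v).2) ∧
          ∀ u : Fin (k * n), u < v → (e u).2 = (c (e u).1) ((e u).2)) ∧
    (∀ e e' : Fin (k * n) ≃ Fin k × Fin n, IsWaveStruct hn e → IsWaveStruct hn e' →
      (fun v : Fin (k * n) => (e v).2) = (fun v => (e' v).2) → e = e') := by
  refine ⟨⟨fun _ => 1, fun j i i' h => h, ?_⟩, ?_, ?_⟩
  · -- uniqueness of the inversion-free orientation
    intro c hc
    funext j
    have hm : StrictMono (c j) := fun i i' h => hc j i i' h
    haveI : WellFoundedLT (Fin n) := inferInstance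
    have hid : StrictMono (id : Fin n → Fin n) := strictMono_id
    have hrange : Set.range ⇑(c j) = Set.range (id : Fin n → Fin n) := by
      rw [Set.range_id]; exact Set.range_eq_univ.mpr (c j).surjective
    have h2 : ⇑(c j) = (id : Fin n → Fin n) := (StrictMono.range_inj hm hid).1 hrange
    exact Equiv.coe_fn_injective (by show ⇑(c j) = ⇑(1 : Equiv.Perm (Fin n)); rw [h2, Equiv.Perm.coe_one])
  · -- lex minimality
    intro e he c
    by_cases hcase : (fun v : Fin (k * n) => (e v).2) = (fun v => (c (e v).1) ((e v).2))
    · exact Or.inl hcase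
    · right
      have hne : ∃ v : Fin (k * n), (e v).2 ≠ (c (e v).1) ((e v).2) :=
        Function.ne_iff.mp hcase
      obtain ⟨v0, hv0⟩ := hne
      set S : Finset (Fin (k * n)) :=
        Finset.univ.filter (fun v => (e v).2 ≠ (c (e v).1) ((e v).2)) with hS
      have hSne : S.Nonempty := ⟨v0, by simp [hS, hv0]⟩
      set v := S.min' hSne with hv
      have hvS : v ∈ S := S.min'_mem hSne
      have hprefix : ∀ u : Fin (k * n), u < v → (e u).2 = (c (e u).1) ((e u).2) := by
        intro u hu
        by_contra h
        exact absurd (S.min'_le u (by simp [hS, h])) (not_le.mpr hu)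
      refine ⟨v, ?_, hprefix⟩
      have hvne : (e v).2 ≠ (c (e v).1) ((e v).2) := by
        simpa [hS] using hvS
      rcases hvne.lt_or_gt with h | h
      · exact h
      · -- impossible: c (e v).1 (e v).2 < (e v).2
        exfalso
        set j := (e v).1
        set i := (e v).2
        set t := (c j) i with ht
        have hvsymm : e.symm (j, i) = v := by
          have : e v = (j, i) := rfl
          rw [← this, Equiv.symm_apply_apply]
        have hu : e.symm (j, t) < v := by
          rw [← hvsymm]
          exact he.1 j h
        have heu : e (e.symm (j, t)) = (j, t) := e.apply_symm_apply _
        have := hprefix _ hu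
        rw [heu] at this
        -- this : t = c j t, but also t = c j i
        have : (c j) t = (c j) i := by rw [← this, ht]
        exact absurd ((c j).injective this) (ne_of_lt h)
  · -- injectivity
    intro e e' he he' hw
    have hw' : ∀ v : Fin (k * n), (e v).2 = (e' v).2 := fun v => congrFun hw v
    suffices key : ∀ m : ℕ, ∀ v : Fin (k * n), v.val = m → e v = e' v from
      Equiv.ext fun v => key v.val v rfl
    intro m
    induction m using Nat.strong_induction_on with
    | _ m IHm =>
      intro v hvm
      have IH : ∀ u : Fin (k * n), u < v → e u = e' u := fun u hu =>
        IHm u.val (hvm ▸ hu) u rfl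
      have hsnd : (e v).2 = (e' v).2 := hw' v
      refine Prod.ext ?_ hsnd
      set j := (e v).1 with hj
      set j' := (e' v).1 with hj'
      have hvj : e.symm (j, (e v).2) = v := by
        have : e v = (j, (e v).2) := rfl
        rw [← this, Equiv.symm_apply_apply]
      have hvj' : e'.symm (j', (e' v).2) = v := by
        have : e' v = (j', (e' v).2) := rfl
        rw [← this, Equiv.symm_apply_apply]
      rcases hieq : (e v).2 with ⟨iv, hi⟩
      by_contra hne
      match iv, hi with
      | 0, hi =>
        have hie : (e v).2 = ⟨0, hn⟩ := by rw [hieq]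
        have hie' : (e' v).2 = ⟨0, hn⟩ := by rw [← hw' v, hieq]
        have hv0 : e.symm (j, ⟨0, hn⟩) = v := by rw [← hvj, hie]
        have hv0' : e'.symm (j', ⟨0, hn⟩) = v := by rw [← hvj', hie']
        rcases Ne.lt_or_gt hne with hlt | hlt
        · -- j < j'
          have huv : e'.symm (j, ⟨0, hn⟩) < v := by rw [← hv0']; exact he'.2.1 hlt
          have heu' : e' (e'.symm (j, ⟨0, hn⟩)) = (j, ⟨0, hn⟩) := e'.apply_symm_apply _
          have heu : e (e'.symm (j, ⟨0, hn⟩)) = (j, ⟨0, hn⟩) := by rw [IH _ huv, heu']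
          have huvv : e'.symm (j, ⟨0, hn⟩) = v := (e.eq_symm_apply.mpr heu).trans hv0
          exact absurd huvv (ne_of_lt huv)
        · -- j' < j
          have huv : e.symm (j', ⟨0, hn⟩) < v := by rw [← hv0]; exact he.2.1 hlt
          have heu : e (e.symm (j', ⟨0, hn⟩)) = (j', ⟨0, hn⟩) := e.apply_symm_apply _
          have heu' : e' (e.symm (j', ⟨0, hn⟩)) = (j', ⟨0, hn⟩) := by rw [← IH _ huv, heu]
          have huvv : e.symm (j', ⟨0, hn⟩) = v := (e'.eq_symm_apply.mpr heu').trans hv0'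
          exact absurd huvv (ne_of_lt huv)
      | N + 1, hi =>
        have hNn : N < n := Nat.lt_of_succ_lt hi
        have hNlt : (⟨N, hNn⟩ : Fin n) < ⟨N + 1, hi⟩ := by simp [Fin.lt_def]
        have hie' : (e' v).2 = ⟨N + 1, hi⟩ := by rw [← hw' v, hieq]
        have hvje : e.symm (j, ⟨N + 1, hi⟩) = v := by rw [← hvj, hieq]
        have hvje' : e'.symm (j', ⟨N + 1, hi⟩) = v := by rw [← hvj', hie']
        -- a : N-th vertex of component j
        have hav : e.symm (j, ⟨N, hNn⟩) < v := by rw [← hvje]; exact he.1 j hNlt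
        have hea : e (e.symm (j, ⟨N, hNn⟩)) = (j, ⟨N, hNn⟩) := e.apply_symm_apply _
        have he'a : e' (e.symm (j, ⟨N, hNn⟩)) = (j, ⟨N, hNn⟩) := by rw [← IH _ hav, hea]
        have hae' : e'.symm (j, ⟨N, hNn⟩) = e.symm (j, ⟨N, hNn⟩) :=
          (e'.eq_symm_apply.mpr he'a).symm
        -- a' : N-th vertex of component j'
        have ha'v : e'.symm (j', ⟨N, hNn⟩) < v := by rw [← hvje']; exact he'.1 j' hNlt
        have he'a' : e' (e'.symm (j', ⟨N, hNn⟩)) = (j', ⟨N, hNn⟩) := e'.apply_symm_apply _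
        have hea' : e (e'.symm (j', ⟨N, hNn⟩)) = (j', ⟨N, hNn⟩) := by rw [IH _ ha'v, he'a']
        have ha'e : e.symm (j', ⟨N, hNn⟩) = e'.symm (j', ⟨N, hNn⟩) :=
          (e.eq_symm_apply.mpr hea').symm
        -- b : (N+1)-th vertex of component j' in e, lies after v
        have heb : e (e.symm (j', ⟨N + 1, hi⟩)) = (j', ⟨N + 1, hi⟩) := e.apply_symm_apply _
        have hbv : v < e.symm (j', ⟨N + 1, hi⟩) := by
          rcases lt_trichotomy (e.symm (j', ⟨N + 1, hi⟩)) v with h | h | h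
          · exfalso
            have he'b : e' (e.symm (j', ⟨N + 1, hi⟩)) = (j', ⟨N + 1, hi⟩) := by
              rw [← IH _ h, heb]
            have hb2 : e.symm (j', ⟨N + 1, hi⟩) = v :=
              (e'.eq_symm_apply.mpr he'b).trans hvje'
            exact absurd hb2 (ne_of_lt h)
          · exfalso
            apply hne
            have h2 : e v = (j', ⟨N + 1, hi⟩) := by rw [← h, heb]
            have := congrArg Prod.fst h2
            rw [hj]
            exact this
          · exact h
        -- b' : (N+1)-th vertex of component j in e', lies after v
        have he'b' : e' (e'.symm (j, ⟨N + 1, hi⟩)) = (j, ⟨N + 1, hi⟩) := e'.apply_symm_apply _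
        have hb'v : v < e'.symm (j, ⟨N + 1, hi⟩) := by
          rcases lt_trichotomy (e'.symm (j, ⟨N + 1, hi⟩)) v with h | h | h
          · exfalso
            have heb' : e (e'.symm (j, ⟨N + 1, hi⟩)) = (j, ⟨N + 1, hi⟩) := by
              rw [IH _ h, he'b']
            have hb2 : e'.symm (j, ⟨N + 1, hi⟩) = v :=
              (e.eq_symm_apply.mpr heb').trans hvje
            exact absurd hb2 (ne_of_lt h)
          · exfalso
            apply hne
            have h2 : e' v = (j, ⟨N + 1, hi⟩) := by rw [← h, he'b']
            have := congrArg Prod.fst h2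
            rw [hj']
            exact this.symm
          · exact h
        have haa' : e.symm (j, ⟨N, hNn⟩) ≠ e'.symm (j', ⟨N, hNn⟩) := by
          intro h
          apply hne
          have h2 : ((j : Fin k), (⟨N, hNn⟩ : Fin n)) = (j', ⟨N, hNn⟩) := by
            rw [← hea, h, hea']
          have h3 := congrArg Prod.fst h2
          exact h3
        rcases haa'.lt_or_gt with hlt | hlt
        · refine he.2.2 j j' N hi ⟨?_, ?_, ?_⟩
          · rw [show e.symm (j', ⟨N, Nat.lt_of_succ_lt hi⟩) = e'.symm (j', ⟨N, hNn⟩) from ha'e]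
            exact hlt
          · rw [show e.symm (j', ⟨N, Nat.lt_of_succ_lt hi⟩) = e'.symm (j', ⟨N, hNn⟩) from ha'e,
              hvje]
            exact ha'v
          · rw [hvje]; exact hbv
        · refine he'.2.2 j' j N hi ⟨?_, ?_, ?_⟩
          · rw [show e'.symm (j, ⟨N, Nat.lt_of_succ_lt hi⟩) = e.symm (j, ⟨N, hNn⟩) from hae']
            exact hlt
          · rw [show e'.symm (j, ⟨N, Nat.lt_of_succ_lt hi⟩) = e.symm (j, ⟨N, hNn⟩) from hae',
              hvje']
            exact hav
          · rw [hvje']; exact hb'v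
end

section
/- The number of lattice words of length kn in the alphabet {1,...,n} containing exactly k copies of each letter equals (kn)! · (1! 2! ⋯ (n-1)!) / (k! (k+1)! ⋯ (k+n-1)!). -/
/-!
Let `f(c)` be the number of lattice words of content `c`, a partition with `n` parts and sum `m`.
Deleting the last letter `x` of such a word leaves a lattice word of content `c - eₓ`, and `x`
must be a removable corner of `c`; hence `f(c) = ∑ₓ f(c - eₓ)`. With the shifted parts
`ℓᵢ = cᵢ + n - 1 - i` and `Δ(ℓ) = ∏_{i<j} (ℓᵢ - ℓⱼ) = det V(-ℓ)`, the Frobenius formula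
`f(c) ∏ ℓᵢ! = m! Δ(ℓ)` satisfies the same recursion, because `∑ₓ ℓₓ Δ(ℓ - eₓ) = m Δ(ℓ)` and the
terms with `x` not a corner vanish. That identity is Jacobi's formula in disguise: replacing row
`i` of `V(v)` by `vᵢ (vᵢ + s)ʲ` is multiplying it by the matrix `S` of the polynomials
`X (X + s)ʲ` reduced modulo `∏ (X - vᵢ)`, so the sum of these determinants is `tr S · det V(v)`.
For the rectangle `c = (k, …, k)` one gets `Δ(ℓ) = ∏_{i<n} i!`.
-/

/-- `w` is a lattice word: every prefix contains at least as many `i`'s as `(i+1)`'s. -/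
def IsLatticeWord {n m : ℕ} (w : Fin m → Fin n) : Prop :=
  ∀ (j i : ℕ), i + 1 < n →
    (Finset.univ.filter (fun p : Fin m => (p : ℕ) < j ∧ (w p : ℕ) = i + 1)).card ≤
    (Finset.univ.filter (fun p : Fin m => (p : ℕ) < j ∧ (w p : ℕ) = i)).card

/-- `w` contains each letter of `Fin n` exactly `k` times. -/
def IsBalanced {n m : ℕ} (k : ℕ) (w : Fin m → Fin n) : Prop :=
  ∀ i : Fin n, (Finset.univ.filter (fun p : Fin m => w p = i)).card = k

open Finset Matrix Polynomial
open scoped Nat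

theorem Matrix.vandermonde_mul_of_coeff_eq_eval {R : Type*} [CommRing R] {n : ℕ} (v : Fin n → R)
    (P : Fin n → R[X]) (hP : ∀ j, (P j).natDegree < n) (i j : Fin n) :
    (vandermonde v * of fun k j : Fin n => (P j).coeff k) i j = (P j).eval (v i) := by
  rw [eval_eq_sum_range' (hP j), ← Fin.sum_univ_eq_sum_range (fun k => (P j).coeff k * v i ^ k)]
  simp [mul_apply, mul_comm]

theorem Polynomial.Monic.modByMonic_eq_sub {R : Type*} [CommRing R] {p q : R[X]} (hp : p.Monic)
    (hq : q.Monic) (h : p.natDegree = q.natDegree) : p %ₘ q = p - q := by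
  nontriviality R
  have hdeg : p.degree = q.degree := by
    rw [degree_eq_natDegree hp.ne_zero, degree_eq_natDegree hq.ne_zero, h]
  refine (div_modByMonic_unique 1 _ hq ⟨by ring, hdeg ▸ degree_sub_lt_left hdeg hp.ne_zero ?_⟩).2
  rw [hp.leadingCoeff, hq.leadingCoeff]

theorem Polynomial.coeff_X_mul_X_add_C_pow_self {R : Type*} [CommRing R] (s : R) (j : ℕ) :
    (X * (X + C s) ^ j).coeff j = j * s := by
  cases j with
  | zero => simp
  | succ j => simp [coeff_X_add_C_pow, mul_comm]

theorem Matrix.sum_det_updateRow_mul {R ι : Type*} [CommRing R] [Fintype ι] [DecidableEq ι]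
    (M S : Matrix ι ι R) :
    ∑ i, (M.updateRow i ((M * S) i)).det = S.trace * M.det := by
  have hrow : ∀ i, (M.updateRow i ((M * S) i)).det = (M * S * adjugate M) i i := by
    intro i
    rw [← cramer_transpose_apply, cramer_eq_adjugate_mulVec, ← adjugate_transpose]
    simp [mul_apply, mulVec, dotProduct, mul_comm]
  calc ∑ i, (M.updateRow i ((M * S) i)).det = (M * S * adjugate M).trace := by
        simp only [hrow]; rfl
    _ = (adjugate M * M * S).trace := by rw [trace_mul_comm, Matrix.mul_assoc]
    _ = S.trace * M.det := by
        rw [adjugate_mul, smul_mul, Matrix.one_mul, trace_smul, smul_eq_mul, mul_comm]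

theorem Matrix.vandermonde_update {R : Type*} [CommRing R] {n : ℕ} (v : Fin n → R) (i : Fin n)
    (a : R) :
    vandermonde (Function.update v i a) = (vandermonde v).updateRow i fun j => a ^ (j : ℕ) := by
  ext p q
  by_cases hp : p = i
  · subst hp; simp
  · simp [hp]

theorem Polynomial.coeff_X_mul_X_add_C_pow_modByMonic {R : Type*} [CommRing R] {Q : R[X]}
    (hQ : Q.Monic) {n j : ℕ} (hQdeg : Q.natDegree = n + 1) (hj : j ≤ n) (s : R) :
    (X * (X + C s) ^ j %ₘ Q).coeff j = j * s - if j = n then Q.coeff n else 0 := by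
  nontriviality R
  have hp : (X * (X + C s) ^ j).Monic := monic_X.mul ((monic_X_add_C s).pow j)
  have hpdeg : (X * (X + C s) ^ j).natDegree = j + 1 := by
    rw [monic_X.natDegree_mul ((monic_X_add_C s).pow j), (monic_X_add_C s).natDegree_pow]
    simp [add_comm]
  split_ifs with hjn
  · rw [hp.modByMonic_eq_sub hQ (by rw [hpdeg, hQdeg, hjn]), coeff_sub,
      coeff_X_mul_X_add_C_pow_self, hjn]
  · rw [(modByMonic_eq_self_iff hQ).2 (degree_lt_degree (by rw [hpdeg, hQdeg]; omega)),
      coeff_X_mul_X_add_C_pow_self, sub_zero]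

theorem Matrix.sum_mul_det_vandermonde_update_add {R : Type*} [CommRing R] {n : ℕ}
    (v : Fin n → R) (s : R) :
    ∑ i, v i * (vandermonde (Function.update v i (v i + s))).det =
      (∑ i, v i + s * ∑ i : Fin n, (i : R)) * (vandermonde v).det := by
  cases n with
  | zero => simp
  | succ n =>
  nontriviality R
  set Q : R[X] := ∏ i, (X - C (v i))
  have hQ : Q.Monic := monic_prod_of_monic _ _ fun i _ => monic_X_sub_C (v i)
  have hQdeg : Q.natDegree = n + 1 := by simp [Q]
  set S : Matrix (Fin (n + 1)) (Fin (n + 1)) R :=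
    of fun k j => (X * (X + C s) ^ (j : ℕ) %ₘ Q).coeff k
  have hrow : ∀ i, (vandermonde v * S) i = v i • fun j : Fin (n + 1) => (v i + s) ^ (j : ℕ) := by
    intro i
    ext j
    have hQroot : Q.eval (v i) = 0 := by
      simp only [Q, eval_prod]
      exact prod_eq_zero (mem_univ i) (by simp)
    rw [vandermonde_mul_of_coeff_eq_eval v _ fun j =>
      (natDegree_modByMonic_lt _ hQ fun h => by simp [h] at hQdeg).trans_eq hQdeg]
    exact (eval₂_modByMonic_eq_self_of_root hQroot).trans (by simp)
  have hQcoeff : Q.coeff n = -∑ i, v i := by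
    simpa using prod_X_sub_C_coeff_card_pred univ v (by simp)
  have htrace : S.trace = ∑ i, v i + s * ∑ i : Fin (n + 1), (i : R) := by
    have hdiag : ∀ j, S j j = j * s + if j = Fin.last n then ∑ i, v i else 0 := fun j => by
      change (X * (X + C s) ^ (j : ℕ) %ₘ Q).coeff j = _
      rw [coeff_X_mul_X_add_C_pow_modByMonic hQ hQdeg (Fin.is_le j)]
      by_cases hj : j = Fin.last n
      · simp [hj, hQcoeff]
      · rw [if_neg (show (j : ℕ) ≠ n from fun h => hj (Fin.ext h)), if_neg hj, sub_zero, add_zero]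
    simp only [trace, diag, hdiag, sum_add_distrib, sum_ite_eq', mem_univ, if_true, ← sum_mul]
    ring
  calc ∑ i, v i * (vandermonde (Function.update v i (v i + s))).det
      = ∑ i, ((vandermonde v).updateRow i ((vandermonde v * S) i)).det := by
        refine sum_congr rfl fun i _ => ?_
        rw [hrow, det_updateRow_smul, vandermonde_update]
    _ = _ := by rw [sum_det_updateRow_mul, htrace]

theorem Nat.card_subtype_eq_sum_snoc {α : Type*} [Fintype α] {m : ℕ}
    (P : (Fin (m + 1) → α) → Prop) :
    Nat.card {w // P w} = ∑ x, Nat.card {w : Fin m → α // P (Fin.snoc w x)} := by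
  calc Nat.card {w // P w} = Nat.card {p : α × (Fin m → α) // P (Fin.snoc p.2 p.1)} :=
        Nat.card_congr ((Fin.snocEquiv fun _ => α).subtypeEquiv fun _ => Iff.rfl).symm
    _ = Nat.card (Σ x, {w : Fin m → α // P (Fin.snoc w x)}) :=
        Nat.card_congr (Equiv.subtypeProdEquivSigmaSubtype fun x w => P (Fin.snoc w x))
    _ = _ := Nat.card_sigma

section LatticeWords

variable {n m : ℕ}

def wordContent (w : Fin m → Fin n) (i : Fin n) : ℕ := #{p | w p = i}

def prefixCount (w : Fin m → Fin n) (j i : ℕ) : ℕ := #{p : Fin m | (p : ℕ) < j ∧ (w p : ℕ) = i}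

theorem isLatticeWord_iff_prefixCount (w : Fin m → Fin n) :
    IsLatticeWord w ↔ ∀ j i, i + 1 < n → prefixCount w j (i + 1) ≤ prefixCount w j i :=
  Iff.rfl

theorem prefixCount_snoc (w : Fin m → Fin n) (x : Fin n) {j : ℕ} (hj : j ≤ m) (i : ℕ) :
    prefixCount (Fin.snoc w x : Fin (m + 1) → Fin n) j i = prefixCount w j i := by
  simp only [prefixCount, card_filter, Fin.sum_univ_castSucc, Fin.snoc_castSucc, Fin.val_castSucc,
    Fin.val_last, show ¬m < j by omega, false_and, if_false, add_zero]

theorem prefixCount_eq_wordContent (w : Fin m → Fin n) {j i : ℕ} (hj : m ≤ j) (hi : i < n) :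
    prefixCount w j i = wordContent w ⟨i, hi⟩ := by
  unfold prefixCount wordContent
  congr 1
  ext p
  simp [Fin.ext_iff, show (p : ℕ) < j by omega]

theorem wordContent_snoc (w : Fin m → Fin n) (x : Fin n) :
    wordContent (Fin.snoc w x : Fin (m + 1) → Fin n) = wordContent w + Pi.single x 1 := by
  ext i
  simp only [wordContent, card_filter, Fin.sum_univ_castSucc, Fin.snoc_castSucc, Fin.snoc_last,
    Pi.add_apply, Pi.single_apply, eq_comm (a := i)]

theorem IsLatticeWord.antitone_wordContent {w : Fin m → Fin n} (hw : IsLatticeWord w) :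
    Antitone (wordContent w) := by
  cases n with
  | zero => exact fun i => i.elim0
  | succ n =>
    refine Fin.antitone_iff_succ_le.2 fun i => ?_
    have : prefixCount w m (i + 1) ≤ prefixCount w m i := hw m i (by omega)
    rwa [prefixCount_eq_wordContent w le_rfl (by omega),
      prefixCount_eq_wordContent w le_rfl (by omega)] at this

theorem isLatticeWord_snoc_iff {w : Fin m → Fin n} {x : Fin n} :
    IsLatticeWord (Fin.snoc w x : Fin (m + 1) → Fin n) ↔
      IsLatticeWord w ∧ Antitone (wordContent (Fin.snoc w x : Fin (m + 1) → Fin n)) := by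
  simp only [isLatticeWord_iff_prefixCount]
  refine ⟨fun h => ⟨fun j i hi => ?_, ?_⟩, fun ⟨hw, hc⟩ j i hi => ?_⟩
  · rcases le_or_gt j m with hj | hj
    · simpa only [prefixCount_snoc w x hj] using h j i hi
    · have := h m i hi
      rwa [prefixCount_snoc w x le_rfl, prefixCount_snoc w x le_rfl,
        prefixCount_eq_wordContent w le_rfl (by omega),
        prefixCount_eq_wordContent w le_rfl (by omega : i < n),
        ← prefixCount_eq_wordContent w hj.le, ← prefixCount_eq_wordContent w hj.le] at this
  · exact IsLatticeWord.antitone_wordContent h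
  · rcases le_or_gt j m with hj | hj
    · simpa only [prefixCount_snoc w x hj] using hw j i hi
    · rw [prefixCount_eq_wordContent _ hj (by omega), prefixCount_eq_wordContent _ hj (by omega)]
      exact hc (Fin.mk_le_mk.2 (Nat.le_succ i))

def latticeWords (n m : ℕ) (c : Fin n → ℕ) : Set (Fin m → Fin n) :=
  {w | IsLatticeWord w ∧ wordContent w = c}

theorem card_latticeWords_succ {c : Fin n → ℕ} (hc : Antitone c) :
    Nat.card (latticeWords n (m + 1) c) =
      ∑ x, Nat.card {w : Fin m → Fin n // IsLatticeWord w ∧ wordContent w + Pi.single x 1 = c} := by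
  refine (Nat.card_subtype_eq_sum_snoc _).trans <| sum_congr rfl fun x _ =>
    Nat.card_congr <| Equiv.subtypeEquivRight fun w => ?_
  simp only [latticeWords, Set.mem_ofPred_eq, isLatticeWord_snoc_iff, wordContent_snoc]
  exact ⟨fun ⟨⟨hw, _⟩, h⟩ => ⟨hw, h⟩, fun ⟨hw, h⟩ => ⟨⟨hw, h ▸ hc⟩, h⟩⟩

def IsRemovableCorner (c : Fin n → ℕ) (x : Fin n) : Prop :=
  0 < c x ∧ ∀ y, x < y → c y < c x

theorem IsLatticeWord.isRemovableCorner {w : Fin m → Fin n} (hw : IsLatticeWord w) {x : Fin n}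
    {c : Fin n → ℕ} (h : wordContent w + Pi.single x 1 = c) : IsRemovableCorner c x := by
  subst h
  refine ⟨by simp, fun y hxy => ?_⟩
  have := hw.antitone_wordContent hxy.le
  simp [hxy.ne']
  omega

theorem antitone_of_antitone_add_single {c : Fin n → ℕ} {x : Fin n}
    (hc : Antitone (c + Pi.single x 1))
    (hx : IsRemovableCorner (c + Pi.single x 1) x) : Antitone c := by
  intro i j hij
  have h := hc hij
  by_cases hi : i = x <;> by_cases hj : j = x
  · rw [hi, hj]
  · subst hi
    have := hx.2 j (lt_of_le_of_ne hij (Ne.symm hj))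
    simp [hj] at this
    omega
  · subst hj
    simp [hi] at h
    omega
  · simpa [hi, hj] using h

def shiftedParts (c : Fin n → ℕ) (i : Fin n) : ℕ := c i + (n - 1 - i)

theorem shiftedParts_add_single (c : Fin n → ℕ) (x : Fin n) :
    shiftedParts (c + Pi.single x 1) = shiftedParts c + Pi.single x 1 := by
  ext i
  simp only [shiftedParts, Pi.add_apply]
  omega

theorem prod_factorial_shiftedParts_add_single (c : Fin n → ℕ) (x : Fin n) :
    ∏ i, (shiftedParts (c + Pi.single x 1) i)! =
      (shiftedParts c x + 1) * ∏ i, (shiftedParts c i)! := by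
  rw [shiftedParts_add_single, Fintype.prod_eq_mul_prod_compl x,
    Fintype.prod_eq_mul_prod_compl x fun i => (shiftedParts c i)!]
  rw [Pi.add_apply, Pi.single_eq_same, Nat.factorial_succ, mul_assoc]
  congr 2
  refine prod_congr rfl fun i hi => ?_
  rw [Pi.add_apply, Pi.single_eq_of_ne (by simpa using hi), add_zero]

theorem sum_shiftedParts_mul_det_vandermonde_update (c : Fin n → ℕ) :
    ∑ x, (shiftedParts c x : ℤ) *
        (vandermonde (Function.update (fun i => -(shiftedParts c i : ℤ)) x
          (-(shiftedParts c x : ℤ) + 1))).det =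
      (∑ i, c i : ℕ) * (vandermonde fun i => -(shiftedParts c i : ℤ)).det := by
  have h := sum_mul_det_vandermonde_update_add (fun i => -(shiftedParts c i : ℤ)) 1
  have hsum : ∑ i, (shiftedParts c i : ℤ) = (∑ i, c i : ℕ) + ∑ i : Fin n, (i : ℤ) := by
    have hrev : ∑ i : Fin n, ((n - 1 - i : ℕ) : ℤ) = ∑ i : Fin n, (i : ℤ) :=
      (Equiv.sum_comp Fin.revPerm _).symm.trans <| sum_congr rfl fun i _ => by simp; omega
    simp [shiftedParts, sum_add_distrib, hrev]
  simp only [neg_mul, sum_neg_distrib, one_mul] at h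
  linear_combination -h + hsum * (vandermonde fun i => -(shiftedParts c i : ℤ)).det

theorem shiftedParts_mul_det_vandermonde_update_eq_zero {c : Fin n → ℕ} (hc : Antitone c)
    {x : Fin n} (hx : ¬IsRemovableCorner c x) :
    (shiftedParts c x : ℤ) *
      (vandermonde (Function.update (fun i => -(shiftedParts c i : ℤ)) x
        (-(shiftedParts c x : ℤ) + 1))).det = 0 := by
  by_cases hlast : (x : ℕ) + 1 = n
  · have hcx : c x = 0 := by
      by_contra h
      exact hx ⟨Nat.pos_of_ne_zero h, fun y hy => absurd (Fin.lt_def.1 hy) (by omega)⟩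
    simp [shiftedParts, hcx, hlast.symm]
  set y : Fin n := ⟨x + 1, by omega⟩
  have hxy : x < y := Fin.lt_def.2 (Nat.lt_succ_self _)
  have hy : c y = c x := by
    refine le_antisymm (hc hxy.le) (not_lt.1 fun hlt => hx ⟨by omega, fun z hz => ?_⟩)
    exact (hc (show y ≤ z from hz)).trans_lt hlt
  refine mul_eq_zero_of_right _ (det_vandermonde_eq_zero_iff.2 ⟨x, y, ?_, hxy.ne⟩)
  simp [Function.update_of_ne hxy.ne', shiftedParts, hy, y]
  omega

theorem card_fiber_mul_prod_factorial {c : Fin n → ℕ} (hc : Antitone c) (hm : ∑ i, c i = m + 1)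
    (ih : ∀ c' : Fin n → ℕ, Antitone c' → ∑ i, c' i = m →
      (Nat.card (latticeWords n m c') : ℤ) * ∏ i, ((shiftedParts c' i)! : ℤ) =
        m ! * (vandermonde fun i => -(shiftedParts c' i : ℤ)).det)
    (x : Fin n) :
    (Nat.card {w : Fin m → Fin n // IsLatticeWord w ∧ wordContent w + Pi.single x 1 = c} : ℤ) *
        ∏ i, ((shiftedParts c i)! : ℤ) =
      m ! * ((shiftedParts c x : ℤ) *
        (vandermonde (Function.update (fun i => -(shiftedParts c i : ℤ)) x
          (-(shiftedParts c x : ℤ) + 1))).det) := by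
  by_cases hx : IsRemovableCorner c x
  · obtain ⟨c', rfl⟩ : ∃ c', c = c' + Pi.single x 1 :=
      ⟨Function.update c x (c x - 1), by
        ext i
        rcases eq_or_ne i x with rfl | hi
        · have := hx.1
          simp
          omega
        · simp [hi]⟩
    have hfiber : Nat.card {w : Fin m → Fin n //
        IsLatticeWord w ∧ wordContent w + Pi.single x 1 = c' + Pi.single x 1} =
          Nat.card (latticeWords n m c') :=
      Nat.card_congr <| Equiv.subtypeEquivRight fun w => by rw [add_left_inj]; rfl
    have hupdate : Function.update (fun i => -(shiftedParts (c' + Pi.single x 1) i : ℤ)) x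
        (-(shiftedParts (c' + Pi.single x 1) x : ℤ) + 1) = fun i => -(shiftedParts c' i : ℤ) := by
      ext i
      rcases eq_or_ne i x with rfl | hi <;> simp [shiftedParts_add_single, Function.update_of_ne, *]
    have hsum : ∑ i, c' i = m := by
      simpa [sum_add_distrib] using hm
    rw [hfiber, hupdate, mul_left_comm, ← ih c' (antitone_of_antitone_add_single hc hx) hsum,
      ← Nat.cast_prod, prod_factorial_shiftedParts_add_single, shiftedParts_add_single,
      Pi.add_apply, Pi.single_eq_same]
    push_cast
    ring
  · have : IsEmpty {w : Fin m → Fin n // IsLatticeWord w ∧ wordContent w + Pi.single x 1 = c} :=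
      ⟨fun w => hx (w.2.1.isRemovableCorner w.2.2)⟩
    rw [Nat.card_of_isEmpty, shiftedParts_mul_det_vandermonde_update_eq_zero hc hx]
    simp

theorem prod_factorial_shiftedParts_const (k : ℕ) :
    ∏ i : Fin n, (shiftedParts (fun _ => k) i)! = ∏ i ∈ range n, (k + i)! := by
  rw [← prod_range_reflect (fun i => (k + i)!) n]
  exact Fin.prod_univ_eq_prod_range (fun i => (k + (n - 1 - i))!) n

theorem det_vandermonde_neg_shiftedParts_const (k : ℕ) :
    (vandermonde fun i : Fin n => -(shiftedParts (fun _ => k) i : ℤ)).det =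
      ∏ i ∈ range n, (i ! : ℤ) := by
  have hshift : (fun i : Fin n => -(shiftedParts (fun _ => k) i : ℤ)) =
      fun i : Fin n => ((i : ℕ) : ℤ) - (k + (n - 1) : ℕ) := by
    ext i
    simp only [shiftedParts]
    omega
  rw [hshift, det_vandermonde_sub]
  cases n with
  | zero => simp
  | succ n =>
    rw [det_vandermonde_id_eq_superFactorial, ← Nat.prod_range_succ_factorial, Nat.cast_prod]

theorem card_latticeWords_mul_prod_factorial : ∀ (m : ℕ) (c : Fin n → ℕ), Antitone c →
    ∑ i, c i = m →
    (Nat.card (latticeWords n m c) : ℤ) * ∏ i, ((shiftedParts c i)! : ℤ) =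
      m ! * (vandermonde fun i => -(shiftedParts c i : ℤ)).det
  | 0, c, _, hm => by
    obtain rfl : c = fun _ => 0 := funext fun i => sum_eq_zero_iff.1 hm i (mem_univ i)
    have huniv : latticeWords n 0 (fun _ => 0) = Set.univ :=
      Set.eq_univ_of_forall fun w => ⟨fun j i _ => by simp, funext fun i => by simp [wordContent]⟩
    rw [huniv, Nat.card_univ, Nat.card_unique, ← Nat.cast_prod, prod_factorial_shiftedParts_const,
      det_vandermonde_neg_shiftedParts_const]
    simp
  | m + 1, c, hc, hm => by
    rw [card_latticeWords_succ hc, Nat.cast_sum, sum_mul,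
      sum_congr rfl fun x _ => card_fiber_mul_prod_factorial hc hm
        (card_latticeWords_mul_prod_factorial m) x,
      ← mul_sum, sum_shiftedParts_mul_det_vandermonde_update, hm, Nat.factorial_succ]
    push_cast
    ring

end LatticeWords

theorem card_latticeWords (k n : ℕ) :
    Nat.card {w : Fin (k * n) → Fin n // IsLatticeWord w ∧ IsBalanced k w} *
        ∏ i ∈ Finset.range n, Nat.factorial (k + i) =
      Nat.factorial (k * n) * ∏ i ∈ Finset.range n, Nat.factorial i := by
  have hcard : Nat.card {w : Fin (k * n) → Fin n // IsLatticeWord w ∧ IsBalanced k w} =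
      Nat.card (latticeWords n (k * n) fun _ => k) :=
    Nat.card_congr <| Equiv.subtypeEquivRight fun w => and_congr_right' funext_iff.symm
  have h := card_latticeWords_mul_prod_factorial (k * n) (fun _ : Fin n => k) antitone_const
    (by simp [mul_comm])
  rw [← Nat.cast_prod, prod_factorial_shiftedParts_const,
    det_vandermonde_neg_shiftedParts_const] at h
  rw [hcard]
  exact_mod_cast h
end
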